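/- arXiv:1503.01098 — 2 statements merged into one kernel-verified Lean document; each statement's English description precedes it below -/
import Mathlib

section
/- Let G be a k-equistable graph with equistable function w bounded by k. Suppose X and Y are two distinct twin classes of G such that X is a stable set and both |X| ≥ k(k+1) and |Y| ≥ k(k+1). Then a contradiction follows; i.e., no k-equistable graph has two distinct twin classes of size at least k(k+1) one of which is a stable set. -/
open Finset

variable {V : Type*}

/-- Two vertices are twins if they have the same neighbors other than each other. -/
def Twins (G : SimpleGraph V) (u v : V) : Prop :=
  G.neighborSet u \ {v} = G.neighborSet v \ {u}

/-- A twin class is an equivalence class of the twin relation. -/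
def TwinClass (G : SimpleGraph V) (C : Set V) : Prop :=
  ∃ u, C = {v | Twins G u v}

/-- A stable (independent) set of vertices. -/
def IsStable (G : SimpleGraph V) (S : Set V) : Prop :=
  ∀ ⦃x⦄, x ∈ S → ∀ ⦃y⦄, y ∈ S → ¬ G.Adj x y

/-- A maximal stable set. -/
def IsMaxStable [Fintype V] [DecidableEq V] (G : SimpleGraph V) (S : Finset V) : Prop :=
  IsStable G ↑S ∧ ∀ T : Finset V, IsStable G ↑T → S ⊆ T → S = T

/-- `(w, t)` is an equistable structure of `G`: a set is a maximal stable set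
iff its total weight is `t`. -/
def EquistableStruct [Fintype V] [DecidableEq V] (G : SimpleGraph V) (w : V → ℕ) (t : ℕ) : Prop :=
  ∀ S : Finset V, IsMaxStable G S ↔ ∑ x ∈ S, w x = t

/-- `G` is `k`-equistable: it has an equistable structure with weights in `{1,…,k}`. -/
def KEquistable [Fintype V] [DecidableEq V] (G : SimpleGraph V) (k : ℕ) : Prop :=
  ∃ t : ℕ, 0 < t ∧ ∃ w : V → ℕ, (∀ x, 1 ≤ w x ∧ w x ≤ k) ∧ EquistableStruct G w t

/-- `G` is target-`t` equistable: it has an equistable structure with positive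
integer weights and target `t`. -/
def TargetEquistable [Fintype V] [DecidableEq V] (G : SimpleGraph V) (t : ℕ) : Prop :=
  ∃ w : V → ℕ, (∀ x, 1 ≤ w x) ∧ EquistableStruct G w t

lemma twins_iff {G : SimpleGraph V} {u v : V} :
    Twins G u v ↔ ∀ z, z ≠ u → z ≠ v → (G.Adj u z ↔ G.Adj v z) := by
  constructor
  · intro h z hzu hzv
    have := Set.ext_iff.mp h z
    simp only [Set.mem_diff, SimpleGraph.mem_neighborSet, Set.mem_singleton_iff] at this
    constructor
    · intro ha; exact (this.mp ⟨ha, hzv⟩).1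
    · intro ha; exact (this.mpr ⟨ha, hzu⟩).1
  · intro h
    ext z
    simp only [Set.mem_diff, SimpleGraph.mem_neighborSet, Set.mem_singleton_iff]
    by_cases hzu : z = u
    · subst hzu; simp [G.irrefl]
    by_cases hzv : z = v
    · subst hzv; simp [G.irrefl]
    · constructor
      · intro ⟨ha, _⟩; exact ⟨(h z hzu hzv).mp ha, hzu⟩
      · intro ⟨ha, _⟩; exact ⟨(h z hzu hzv).mpr ha, hzv⟩

lemma twins_refl (G : SimpleGraph V) (u : V) : Twins G u u := rfl

lemma twins_symm {G : SimpleGraph V} {u v : V} (h : Twins G u v) : Twins G v u := h.symm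

lemma twins_trans {G : SimpleGraph V} {u v x : V} (h1 : Twins G u v) (h2 : Twins G v x) :
    Twins G u x := by
  by_cases huv : u = v; · subst huv; exact h2
  by_cases hvx : v = x; · subst hvx; exact h1
  by_cases hux : u = x; · subst hux; exact twins_refl G u
  rw [twins_iff] at h1 h2 ⊢
  intro z hzu hzx
  by_cases hzv : z = v
  · subst hzv
    have k1 : G.Adj u x ↔ G.Adj z x := h1 x (Ne.symm hux) (Ne.symm hzx)
    have k2 : G.Adj z u ↔ G.Adj x u := h2 u (Ne.symm hzu) hux
    calc G.Adj u z ↔ G.Adj z u := G.adj_comm u z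
      _ ↔ G.Adj x u := k2
      _ ↔ G.Adj u x := G.adj_comm x u
      _ ↔ G.Adj z x := k1
      _ ↔ G.Adj x z := G.adj_comm z x
  · exact (h1 z hzu hzv).trans (h2 z hzv hzx)

lemma class_eq {G : SimpleGraph V} {C : Set V} (hC : TwinClass G C) {x : V} (hx : x ∈ C) :
    C = {v | Twins G x v} := by
  obtain ⟨u, rfl⟩ := hC
  have hux : Twins G u x := hx
  ext v
  exact ⟨fun h => twins_trans (twins_symm hux) h, fun h => twins_trans hux h⟩

lemma class_disj {G : SimpleGraph V} {C D : Set V} (hC : TwinClass G C) (hD : TwinClass G D)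
    (hne : C ≠ D) {x : V} (hxC : x ∈ C) : x ∉ D := by
  intro hxD
  exact hne ((class_eq hC hxC).trans (class_eq hD hxD).symm)

/-- homogeneity: two members of a class have the same adjacency to any outside vertex. -/
lemma class_hom {G : SimpleGraph V} {C : Set V} (hC : TwinClass G C) {x x' z : V}
    (hx : x ∈ C) (hx' : x' ∈ C) (hz : z ∉ C) : (G.Adj x z ↔ G.Adj x' z) := by
  have htw : Twins G x x' := by
    have := class_eq hC hx; rw [this] at hx'; exact hx'
  have hzx : z ≠ x := fun h => hz (h ▸ hx)
  have hzx' : z ≠ x' := fun h => hz (h ▸ hx')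
  exact twins_iff.mp htw z hzx hzx'

open scoped Classical in
lemma exists_max_stable_ext [Fintype V] [DecidableEq V] (G : SimpleGraph V) (S : Finset V)
    (hS : IsStable G ↑S) : ∃ M, S ⊆ M ∧ IsMaxStable G M := by
  have hne : (Finset.univ.filter (fun T : Finset V => IsStable G ↑T ∧ S ⊆ T)).Nonempty :=
    ⟨S, by simp [hS]⟩
  obtain ⟨M, hMmem, hMmax⟩ := Finset.exists_max_image _ (fun T : Finset V => T.card) hne
  simp only [Finset.mem_filter, Finset.mem_univ, true_and] at hMmem
  refine ⟨M, hMmem.2, hMmem.1, ?_⟩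
  intro T hT hMT
  refine Finset.eq_of_subset_of_card_le hMT (hMmax T ?_)
  simp only [Finset.mem_filter, Finset.mem_univ, true_and]
  exact ⟨hT, hMmem.2.trans hMT⟩

lemma pigeon {k : ℕ} {w : V → ℕ} (hw : ∀ x, 1 ≤ w x ∧ w x ≤ k) (hk : 1 ≤ k)
    (C : Finset V) (hC : k * k ≤ C.card) :
    ∃ c, 1 ≤ c ∧ c ≤ k ∧ ∃ D ⊆ C, D.card = k ∧ ∀ x ∈ D, w x = c := by
  have hmaps : ∀ x ∈ C, w x ∈ Finset.Icc 1 k := by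
    intro x _; simp [Finset.mem_Icc]; exact ⟨(hw x).1, (hw x).2⟩
  have hcard : (Finset.Icc 1 k).card * (k - 1) < C.card := by
    rw [Nat.card_Icc]
    have h1 : (k + 1 - 1) * (k - 1) < k * k := by
      have h2 : k + 1 - 1 = k := by omega
      rw [h2]
      calc k * (k - 1) < k * (k - 1) + k := by omega
        _ = k * k := by rw [← Nat.mul_succ]; congr 1; omega
    omega
  obtain ⟨c, hc, hfib⟩ := Finset.exists_lt_card_fiber_of_mul_lt_card_of_maps_to hmaps hcard
  simp only [Finset.mem_Icc] at hc
  have : k ≤ (C.filter fun x => w x = c).card := by omega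
  obtain ⟨D, hD, hDcard⟩ := Finset.exists_subset_card_eq this
  refine ⟨c, hc.1, hc.2, D, fun x hx => (Finset.mem_filter.mp (hD hx)).1, hDcard,
    fun x hx => (Finset.mem_filter.mp (hD hx)).2⟩

lemma swap_contra [Fintype V] [DecidableEq V] {G : SimpleGraph V} {k t : ℕ} {w : V → ℕ}
    (hES : EquistableStruct G w t) (hw : ∀ x, 1 ≤ w x ∧ w x ≤ k) (hk : 1 ≤ k)
    (M : Finset V) (hM : IsMaxStable G M)
    (P Q : Finset V) (hPM : P ⊆ M) (hQM : ∀ y ∈ Q, y ∉ M)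
    (hPQ : ∀ x ∈ P, x ∉ Q)
    (hPc : k * k + k ≤ P.card) (hQc : k * k ≤ Q.card)
    (hcase : (∀ x ∈ P, ∀ y ∈ Q, ¬ G.Adj x y) ∨ (∀ x ∈ P, ∀ y ∈ Q, G.Adj x y) ∨
      (∃ x₀ ∈ M, x₀ ∉ P ∧ ∀ y ∈ Q, G.Adj x₀ y)) : False := by
  obtain ⟨a, ha1, hak, DP, hDP, hDPcard, hDPw⟩ := pigeon hw hk P (le_trans (by omega) hPc)
  obtain ⟨b, hb1, hbk, DQ, hDQ, hDQcard, hDQw⟩ := pigeon hw hk Q hQc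
  obtain ⟨A, hA, hAcard⟩ := Finset.exists_subset_card_eq (show b ≤ DP.card by omega)
  obtain ⟨B, hB, hBcard⟩ := Finset.exists_subset_card_eq (show a ≤ DQ.card by omega)
  have hAP : A ⊆ P := hA.trans hDP
  have hBQ : B ⊆ Q := hB.trans hDQ
  have hAM : A ⊆ M := hAP.trans hPM
  set S' : Finset V := (M \ A) ∪ B with hS'def
  have hdisj : Disjoint (M \ A) B := by
    rw [Finset.disjoint_right]
    intro y hyB hyM
    exact hQM y (hBQ hyB) (Finset.mem_sdiff.mp hyM).1
  have hsumA : ∑ x ∈ A, w x = b * a := by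
    rw [Finset.sum_congr rfl (fun x hx => hDPw x (hA hx)), Finset.sum_const, hAcard,
      smul_eq_mul]
  have hsumB : ∑ x ∈ B, w x = a * b := by
    rw [Finset.sum_congr rfl (fun x hx => hDQw x (hB hx)), Finset.sum_const, hBcard,
      smul_eq_mul]
  have hsumM : ∑ x ∈ M, w x = t := (hES M).mp hM
  have hsum : ∑ x ∈ S', w x = t := by
    rw [hS'def, Finset.sum_union hdisj, hsumB]
    have := Finset.sum_sdiff (f := w) hAM
    rw [hsumA] at this
    rw [Nat.mul_comm a b]
    omega
  have hS' : IsMaxStable G S' := (hES S').mpr hsum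
  -- pick an element of B
  have hBne : B.Nonempty := Finset.card_pos.mp (by omega)
  obtain ⟨y, hyB⟩ := hBne
  have hyQ : y ∈ Q := hBQ hyB
  have hyS' : y ∈ S' := Finset.mem_union_right _ hyB
  rcases hcase with hemp | hcomp | ⟨x₀, hx₀M, hx₀P, hx₀adj⟩
  · -- P-Q empty: a removed vertex can be re-inserted
    have hAne : A.Nonempty := Finset.card_pos.mp (by omega)
    obtain ⟨x, hxA⟩ := hAne
    have hxP : x ∈ P := hAP hxA
    have hxS' : x ∉ S' := by
      rw [hS'def, Finset.mem_union, Finset.mem_sdiff]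
      push_neg
      exact ⟨fun _ => hxA, fun hxB => (hPQ x hxP) (hBQ hxB)⟩
    have hstab : IsStable G ↑(insert x S') := by
      intro p hp q hq hadj
      simp only [Finset.coe_insert, Set.mem_insert_iff, Finset.mem_coe] at hp hq
      have key : ∀ z ∈ S', ¬ G.Adj x z := by
        intro z hz
        rw [hS'def, Finset.mem_union] at hz
        rcases hz with hz | hz
        · exact hM.1 (Finset.mem_coe.mpr (hAM hxA)) (Finset.mem_coe.mpr (Finset.mem_sdiff.mp hz).1)
        · exact hemp x hxP z (hBQ hz)
      rcases hp with rfl | hp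
      · rcases hq with rfl | hq
        · exact G.irrefl hadj
        · exact key q hq hadj
      · rcases hq with rfl | hq
        · exact key p hp (hadj.symm)
        · exact hS'.1 (Finset.mem_coe.mpr hp) (Finset.mem_coe.mpr hq) hadj
    have := hS'.2 (insert x S') hstab (Finset.subset_insert x S')
    exact hxS' (this ▸ Finset.mem_insert_self x S')
  · -- P-Q complete: a surviving P-vertex is adjacent to an added Q-vertex
    have hex : ∃ x₀ ∈ P, x₀ ∉ A := by
      rw [← Finset.not_subset]
      intro hsub
      have h1 := Finset.card_le_card hsub
      have hkk : 1 ≤ k * k := Nat.mul_pos hk hk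
      omega
    obtain ⟨x₀, hx₀P, hx₀A⟩ := hex
    have hx₀S' : x₀ ∈ S' := Finset.mem_union_left _ (Finset.mem_sdiff.mpr ⟨hPM hx₀P, hx₀A⟩)
    exact hS'.1 (Finset.mem_coe.mpr hx₀S') (Finset.mem_coe.mpr hyS') (hcomp x₀ hx₀P y hyQ)
  · -- fixed M-vertex adjacent to all of Q
    have hx₀A : x₀ ∉ A := fun hc => hx₀P (hAP hc)
    have hx₀S' : x₀ ∈ S' := Finset.mem_union_left _ (Finset.mem_sdiff.mpr ⟨hx₀M, hx₀A⟩)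
    exact hS'.1 (Finset.mem_coe.mpr hx₀S') (Finset.mem_coe.mpr hyS') (hx₀adj y hyQ)

lemma stable_insert [Fintype V] [DecidableEq V] {G : SimpleGraph V} {S : Finset V}
    (hS : IsStable G ↑S) {z : V} (hz : ∀ m ∈ S, ¬ G.Adj z m) :
    IsStable G ↑(insert z S) := by
  intro p hp q hq hadj
  simp only [Finset.coe_insert, Set.mem_insert_iff, Finset.mem_coe] at hp hq
  rcases hp with rfl | hp
  · rcases hq with rfl | hq
    · exact G.irrefl hadj
    · exact hz q hq hadj
  · rcases hq with rfl | hq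
    · exact hz p hp hadj.symm
    · exact hS (Finset.mem_coe.mpr hp) (Finset.mem_coe.mpr hq) hadj

lemma branch_contra [Fintype V] [DecidableEq V] {G : SimpleGraph V} {k t : ℕ} {w : V → ℕ}
    (hES : EquistableStruct G w t) (hw : ∀ x, 1 ≤ w x ∧ w x ≤ k) (hk : 1 ≤ k)
    (P Q : Finset V) (hQstab : IsStable G ↑Q) (z : V)
    (hzQ : ∀ y ∈ Q, ¬ G.Adj z y) (hzP : ∀ x ∈ P, G.Adj z x)
    (hPQemp : ∀ y ∈ Q, ∀ x ∈ P, ¬ G.Adj y x)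
    (hPQdisj : ∀ y ∈ Q, y ∉ P)
    (hQc : k * k + k ≤ Q.card) (hPc : k * k ≤ P.card) : False := by
  have hstab : IsStable G ↑(insert z Q) := stable_insert hQstab hzQ
  obtain ⟨T, hsub, hT⟩ := exists_max_stable_ext G (insert z Q) hstab
  have hzT : z ∈ T := hsub (Finset.mem_insert_self _ _)
  have hQT : Q ⊆ T := fun y hy => hsub (Finset.mem_insert_of_mem hy)
  refine swap_contra hES hw hk T hT Q P hQT ?_ hPQdisj hQc hPc (Or.inl hPQemp)
  intro x hx hxT
  exact hT.1 (Finset.mem_coe.mpr hzT) (Finset.mem_coe.mpr hxT) (hzP x hx)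

theorem stmt9 [Fintype V] [DecidableEq V] (G : SimpleGraph V) (k : ℕ)
    (h : KEquistable G k) (X Y : Set V) (hX : TwinClass G X) (hY : TwinClass G Y)
    (hXY : X ≠ Y) (hXs : IsStable G X)
    (hXc : k * (k + 1) ≤ X.ncard) (hYc : k * (k + 1) ≤ Y.ncard) : False := by
  obtain ⟨t, ht, w, hw, hES⟩ := h
  obtain ⟨u, hXu⟩ := id hX
  have huX : u ∈ X := by rw [hXu]; exact twins_refl G u
  obtain ⟨v0, hYv0⟩ := id hY
  have hv0Y : v0 ∈ Y := by rw [hYv0]; exact twins_refl G v0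
  have hk : 1 ≤ k := le_trans (hw u).1 (hw u).2
  have hksq : k * (k + 1) = k * k + k := by ring
  have hXfin : X.Finite := Set.toFinite X
  have hYfin : Y.Finite := Set.toFinite Y
  set Xf := hXfin.toFinset with hXfdef
  set Yf := hYfin.toFinset with hYfdef
  have mX : ∀ {x : V}, x ∈ Xf ↔ x ∈ X := fun {x} => hXfin.mem_toFinset
  have mY : ∀ {x : V}, x ∈ Yf ↔ x ∈ Y := fun {x} => hYfin.mem_toFinset
  have hXfcard : k * k + k ≤ Xf.card := by
    rw [← hksq, ← Set.ncard_eq_toFinset_card X hXfin]; exact hXc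
  have hYfcard : k * k + k ≤ Yf.card := by
    rw [← hksq, ← Set.ncard_eq_toFinset_card Y hYfin]; exact hYc
  have hXnY : ∀ x ∈ X, x ∉ Y := fun x hx => class_disj hX hY hXY hx
  have hYnX : ∀ y ∈ Y, y ∉ X := fun y hy => class_disj hY hX (Ne.symm hXY) hy
  -- dichotomy between classes
  have hdich : (∀ x ∈ X, ∀ y ∈ Y, ¬ G.Adj x y) ∨ (∀ x ∈ X, ∀ y ∈ Y, G.Adj x y) := by
    by_cases hadj : G.Adj u v0
    · right; intro x hx y hy
      have e1 : G.Adj u v0 ↔ G.Adj x v0 := class_hom hX huX hx (hYnX v0 hv0Y)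
      have e2 : G.Adj v0 x ↔ G.Adj y x := class_hom hY hv0Y hy (hXnY x hx)
      exact (e2.mp (e1.mp hadj).symm).symm
    · left; intro x hx y hy hxy
      apply hadj
      have e2 : G.Adj v0 x ↔ G.Adj y x := class_hom hY hv0Y hy (hXnY x hx)
      have e1 : G.Adj u v0 ↔ G.Adj x v0 := class_hom hX huX hx (hYnX v0 hv0Y)
      exact e1.mpr (e2.mpr hxy.symm).symm
  -- maximal stable set containing X
  have hXfstab : IsStable G ↑Xf := by
    intro p hp q hq
    exact hXs (mX.mp (Finset.mem_coe.mp hp)) (mX.mp (Finset.mem_coe.mp hq))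
  obtain ⟨M, hXfM, hM⟩ := exists_max_stable_ext G Xf hXfstab
  have hXsubM : ∀ x ∈ X, x ∈ M := fun x hx => hXfM (mX.mpr hx)
  by_cases hYM : ∃ y ∈ Y, y ∈ M
  · obtain ⟨y₀, hy₀Y, hy₀M⟩ := hYM
    -- X-Y must be empty
    have hXYemp : ∀ x ∈ X, ∀ y ∈ Y, ¬ G.Adj x y := by
      intro x hx y hy hadj
      have e2 : G.Adj y x ↔ G.Adj y₀ x := class_hom hY hy hy₀Y (hXnY x hx)
      exact hM.1 (Finset.mem_coe.mpr hy₀M) (Finset.mem_coe.mpr (hXsubM x hx))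
        (e2.mp hadj.symm)
    by_cases hcl : ∃ y1 ∈ Y, ∃ y2 ∈ Y, G.Adj y1 y2
    · -- Y is a clique
      obtain ⟨y1, hy1, y2, hy2, h12⟩ := hcl
      have step : ∀ p ∈ Y, ∀ q ∈ Y, G.Adj p q → ∀ r ∈ Y, r ≠ p → G.Adj p r := by
        intro p hp q hq hpq r hr hrp
        by_cases hrq : r = q
        · subst hrq; exact hpq
        · have htw : Twins G q r := by
            have hqr := class_eq hY hq; rw [hqr] at hr; exact hr
          have e := twins_iff.mp htw p (G.ne_of_adj hpq) (Ne.symm hrp)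
          exact (e.mp hpq.symm).symm
      have hclique : ∀ y ∈ Y, ∀ y' ∈ Y, y ≠ y' → G.Adj y y' := by
        intro y hy y' hy' hne
        by_cases hyy1 : y = y1
        · subst hyy1; exact step y hy y2 hy2 h12 y' hy' (Ne.symm hne)
        · have h1y : G.Adj y1 y := step y1 hy1 y2 hy2 h12 y hy hyy1
          exact step y hy y1 hy1 h1y.symm y' hy' (Ne.symm hne)
      have hy₀Yf : y₀ ∈ Yf := mY.mpr hy₀Y
      refine swap_contra hES hw hk M hM Xf (Yf.erase y₀) hXfM ?_ ?_ hXfcard ?_ ?_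
      · intro y hy hyM
        obtain ⟨hyne, hyYf⟩ := Finset.mem_erase.mp hy
        exact hM.1 (Finset.mem_coe.mpr hyM) (Finset.mem_coe.mpr hy₀M)
          (hclique y (mY.mp hyYf) y₀ hy₀Y hyne)
      · intro x hx hxe
        exact hXnY x (mX.mp hx) (mY.mp (Finset.mem_erase.mp hxe).2)
      · rw [Finset.card_erase_of_mem hy₀Yf]
        omega
      · refine Or.inr (Or.inr ⟨y₀, hy₀M, fun hc => hYnX y₀ hy₀Y (mX.mp hc), ?_⟩)
        intro y hy
        obtain ⟨hyne, hyYf⟩ := Finset.mem_erase.mp hy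
        exact hclique y₀ hy₀Y y (mY.mp hyYf) (Ne.symm hyne)
    · -- Y is stable
      push_neg at hcl
      -- z distinguishing X and Y
      have hnt : ¬ Twins G u v0 := by
        intro htw
        have hv0X : v0 ∈ X := by rw [hXu]; exact htw
        exact hYnX v0 hv0Y hv0X
      rw [twins_iff] at hnt; push_neg at hnt
      obtain ⟨z, hzu, hzv0, hziff⟩ := hnt
      have hcases : (G.Adj u z ∧ ¬ G.Adj v0 z) ∨ (¬ G.Adj u z ∧ G.Adj v0 z) := by tauto
      have hYfstab : IsStable G ↑Yf := by
        intro p hp q hq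
        exact hcl p (mY.mp (Finset.mem_coe.mp hp)) q (mY.mp (Finset.mem_coe.mp hq))
      rcases hcases with ⟨hA, hB⟩ | ⟨hA, hB⟩
      · -- z adjacent to all X, to no Y
        have hzX : z ∉ X := fun hzX => hXs huX hzX hA
        have hzY : z ∉ Y := fun hzY => hXYemp u huX z hzY hA
        have hzP : ∀ x ∈ Xf, G.Adj z x := by
          intro x hx
          exact ((class_hom hX huX (mX.mp hx) hzX).mp hA).symm
        have hzQ : ∀ y ∈ Yf, ¬ G.Adj z y := by
          intro y hy hadj
          exact hB ((class_hom hY hv0Y (mY.mp hy) hzY).mpr hadj.symm)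
        refine branch_contra hES hw hk Xf Yf hYfstab z hzQ hzP ?_ ?_ hYfcard (by omega)
        · intro y hy x hx hadj
          exact hXYemp x (mX.mp hx) y (mY.mp hy) hadj.symm
        · intro y hy
          exact fun hc => hYnX y (mY.mp hy) (mX.mp hc)
      · -- z adjacent to all Y, to no X
        have hzY : z ∉ Y := fun hzY => hcl v0 hv0Y z hzY hB
        have hzX : z ∉ X := fun hzX => hXYemp z hzX v0 hv0Y hB.symm
        have hzP : ∀ y ∈ Yf, G.Adj z y := by
          intro y hy
          exact ((class_hom hY hv0Y (mY.mp hy) hzY).mp hB).symm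
        have hzQ : ∀ x ∈ Xf, ¬ G.Adj z x := by
          intro x hx hadj
          exact hA ((class_hom hX huX (mX.mp hx) hzX).mpr hadj.symm)
        refine branch_contra hES hw hk Yf Xf hXfstab z hzQ hzP ?_ ?_ hXfcard (by omega)
        · intro x hx y hy hadj
          exact hXYemp x (mX.mp hx) y (mY.mp hy) hadj
        · intro x hx
          exact fun hc => hXnY x (mX.mp hx) (mY.mp hc)
  · -- M misses Y entirely
    push_neg at hYM
    refine swap_contra hES hw hk M hM Xf Yf hXfM ?_ ?_ hXfcard (by omega) ?_
    · intro y hy; exact hYM y (mY.mp hy)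
    · intro x hx; exact fun hc => hXnY x (mX.mp hx) (mY.mp hc)
    · rcases hdich with hemp | hcomp
      · exact Or.inl (fun x hx y hy => hemp x (mX.mp hx) y (mY.mp hy))
      · exact Or.inr (Or.inl (fun x hx y hy => hcomp x (mX.mp hx) y (mY.mp hy)))
end

section
/- Let G be a graph with a stable set twin class X whose vertices have no neighbors outside X (X is isolated in the quotient graph), with |X| ≥ k⁵ and |V(G) \ X| ≤ k³. Let G' be obtained from G by deleting all but k⁴ vertices of X. Then G is k-equistable if and only if G' is k-equistable. -/
open Finset

variable {V : Type*}

/-!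
The vertices of `X` are isolated, so the maximal stable sets of `G` are the sets `X ∪ M` with
`M` maximal stable in `G - X`, and those of `G'` are the sets `D ∪ M`. Writing a set as
`(X \ B) ∪ M`, weights `w` with target `w(X) + μ` are an equistable structure exactly when,
for all such `M` and `B`, `w(M) = μ + w(B)` is equivalent to `B = ∅` with `M` maximal. This
condition passes from `X` to `D`, so restricting weights shows that `G'` is `k`-equistable when
`G` is.

Conversely, take weights `a` for `G'`. Some value `v ≤ k` is taken at least `k³` times on `D`;
packing the other vertices of `D` greedily into Erdős–Ginzburg–Ziv blocks of sum divisible by `v`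
and topping up with copies of `v` shows that every multiple of `v` up to `k⁴` is a subset sum of
`a` on `D`. Give every vertex of `X` the weight `v`. Since `a(M) ≤ k³ · k = k⁴`, a solution of
`a(M) = μ + v·|B|` with `B ≠ ∅` could be traded for a nonempty `B' ⊆ D` with `a(B') = v·|B|`,
which is impossible in `G'`.
-/

theorem exists_subset_dvd_sum_le {α : Type*} [DecidableEq α] (a : α → ℕ) {O : Finset α} {k : ℕ}
    (ha : ∀ x ∈ O, a x ≤ k) {v : ℕ} (hv : 0 < v) (N : ℕ) :
    ∃ B ⊆ O, v ∣ ∑ x ∈ B, a x ∧ ∑ x ∈ B, a x ≤ N ∧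
      (N < ∑ x ∈ B, a x + v * k ∨ #(O \ B) < 2 * v - 1) := by
  -- if `B` has maximum cardinality, no Erdős–Ginzburg–Ziv block of `O \ B` can be added to it
  obtain ⟨B, hB, hBmax⟩ := exists_max_image
    {B ∈ O.powerset | v ∣ ∑ x ∈ B, a x ∧ ∑ x ∈ B, a x ≤ N} card ⟨∅, by simp⟩
  simp only [mem_filter, mem_powerset] at hB hBmax
  obtain ⟨hBO, hdvd, hle⟩ := hB
  refine ⟨B, hBO, hdvd, hle, ?_⟩
  by_contra! h
  obtain ⟨T, hTO, hTcard, hTdvd⟩ := Int.erdos_ginzburg_ziv (fun x => (a x : ℤ)) h.2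
  have hTdvd' : v ∣ ∑ x ∈ T, a x := by exact_mod_cast hTdvd
  have hTsum : ∑ x ∈ T, a x ≤ v * k := by
    simpa [hTcard] using sum_le_card_nsmul T a k fun x hx => ha x (sdiff_subset (hTO hx))
  have hdisj : Disjoint B T := disjoint_of_subset_right hTO disjoint_sdiff
  have hBT := hBmax (B ∪ T) ⟨union_subset hBO (hTO.trans sdiff_subset),
    by rw [sum_union hdisj]; exact dvd_add hdvd hTdvd', by rw [sum_union hdisj]; omega⟩
  rw [card_union_of_disjoint hdisj] at hBT
  omega

theorem exists_forall_mul_eq_subset_sum {α : Type*} [DecidableEq α] (a : α → ℕ) {k : ℕ}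
    (hk : 0 < k) {D : Finset α} (hD : #D = k ^ 4) (ha : ∀ x ∈ D, 1 ≤ a x ∧ a x ≤ k) :
    ∃ u, 1 ≤ u ∧ u ≤ k ∧ ∀ j, j * u ≤ k ^ 4 → ∃ B ⊆ D, ∑ x ∈ B, a x = j * u := by
  obtain ⟨v, hv, hP⟩ := exists_le_card_fiber_of_mul_le_card_of_maps_to (t := Icc 1 k)
    (n := k ^ 3) (fun x hx => mem_Icc.2 (ha x hx)) (nonempty_Icc.2 hk)
    (by rw [hD, Nat.card_Icc, add_tsub_cancel_right, ← pow_succ'])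
  rw [mem_Icc] at hv
  have hkk : k * k ≤ k ^ 3 := by rw [← sq]; exact Nat.pow_le_pow_right hk (by norm_num)
  set P := {x ∈ D | a x = v}
  set O := {x ∈ D | ¬a x = v}
  refine ⟨v, hv.1, hv.2, fun j hj => ?_⟩
  obtain ⟨B, hBO, hBdvd, hBle, hgap⟩ :=
    exists_subset_dvd_sum_le a (O := O) (fun x hx => (ha x (filter_subset _ D hx)).2) hv.1 (j * v)
  have hPO : #O + #P = k ^ 4 := by rw [← hD, add_comm]; exact card_filter_add_card_filter_not _
  have hgap_le : j * v - ∑ x ∈ B, a x ≤ #P * v := by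
    rcases hgap with h | h
    · have := Nat.mul_le_mul_right k hv.2
      have := Nat.le_mul_of_pos_right #P hv.1
      omega
    · obtain ⟨v', rfl⟩ : ∃ v', v = v' + 1 := ⟨v - 1, by omega⟩
      have hrest : ∑ x ∈ O \ B, a x ≤ 2 * v' * k := by
        have := sum_le_card_nsmul (O \ B) a k fun x hx =>
          (ha x (filter_subset _ D (sdiff_subset hx))).2
        rw [smul_eq_mul] at this
        exact this.trans (Nat.mul_le_mul_right k (by omega))
      have hO : #O ≤ ∑ x ∈ O, a x := by
        simpa using card_nsmul_le_sum O a 1 fun x hx => (ha x (filter_subset _ D hx)).1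
      have hsplit := sum_sdiff hBO (f := a)
      have hPk : v' * (2 * k) ≤ v' * #P := by
        rcases Nat.eq_zero_or_pos v' with rfl | hv'
        · simp
        · have := Nat.mul_le_mul_right k (show 2 ≤ k by omega)
          exact Nat.mul_le_mul_left v' (by omega)
      have hsub := Nat.sub_add_cancel hBle
      linarith
  obtain ⟨c, hc⟩ := Nat.dvd_sub (dvd_mul_left v j) hBdvd
  obtain ⟨C, hCP, hCcard⟩ := exists_subset_card_eq (s := P) (n := c) (by nlinarith)
  have hCsum : ∑ x ∈ C, a x = c * v := by
    rw [sum_congr rfl fun x hx => (mem_filter.1 (hCP hx)).2, sum_const, hCcard, smul_eq_mul]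
  refine ⟨B ∪ C, union_subset (hBO.trans (filter_subset _ _)) (hCP.trans (filter_subset _ _)), ?_⟩
  rw [sum_union (disjoint_of_subset_left hBO (disjoint_of_subset_right hCP
    (disjoint_filter_filter_not _ _ _).symm)), hCsum, mul_comm c]
  omega

theorem sum_eq_add_mul_iff_of_forall_mul_eq_sum {α : Type*} (P : Finset α → Prop)
    {W D : Finset α} {a : α → ℕ} {μ u n : ℕ} (hu : 0 < u)
    (hcond : ∀ M ⊆ W, ∀ B ⊆ D, (∑ x ∈ M, a x = μ + ∑ x ∈ B, a x ↔ B = ∅ ∧ P M))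
    (hsums : ∀ j, j * u ≤ n → ∃ B ⊆ D, ∑ x ∈ B, a x = j * u)
    (hW : ∀ M ⊆ W, ∑ x ∈ M, a x ≤ n) {M : Finset α} (hM : M ⊆ W) (j : ℕ) :
    ∑ x ∈ M, a x = μ + j * u ↔ j = 0 ∧ P M := by
  rcases j.eq_zero_or_pos with rfl | hj
  · simpa using hcond M hM ∅ (empty_subset D)
  refine iff_of_false (fun heq => ?_) fun h => hj.ne' h.1
  obtain ⟨B, hBD, hB⟩ := hsums j (by have := hW M hM; omega)
  have hBempty := ((hcond M hM B hBD).1 (by rw [hB, heq])).1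
  rw [hBempty, sum_empty] at hB
  exact (Nat.mul_pos hj hu).ne' hB.symm

section MaximalStable

variable (G : SimpleGraph V)

/-- `S` is a maximal stable set of the subgraph induced on `U`. -/
def IsMaximalStableIn (U S : Finset V) : Prop :=
  S ⊆ U ∧ IsStable G ↑S ∧ ∀ y ∈ U, y ∉ S → ∃ x ∈ S, G.Adj x y

def EquistableOn (U : Finset V) (w : V → ℕ) (t : ℕ) : Prop :=
  ∀ S ⊆ U, IsMaximalStableIn G U S ↔ ∑ x ∈ S, w x = t

def KEquistableOn (U : Finset V) (k : ℕ) : Prop :=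
  ∃ t, 0 < t ∧ ∃ w : V → ℕ, (∀ x ∈ U, 1 ≤ w x ∧ w x ≤ k) ∧ EquistableOn G U w t

theorem IsStable.insert [DecidableEq V] {S : Finset V} (hS : IsStable G ↑S) {y : V}
    (hy : ∀ x ∈ S, ¬G.Adj x y) : IsStable G ↑(insert y S) := by
  intro u hu w hw
  simp only [coe_insert, Set.mem_insert_iff, mem_coe] at hu hw
  rcases hu with rfl | hu <;> rcases hw with rfl | hw
  · exact G.loopless.irrefl _
  · exact fun h => hy w hw h.symm
  · exact hy u hu
  · exact hS hu hw

theorem isMaxStable_iff_dominating [Fintype V] [DecidableEq V] (S : Finset V) :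
    IsMaxStable G S ↔ IsStable G ↑S ∧ ∀ y, y ∉ S → ∃ x ∈ S, G.Adj x y := by
  refine and_congr_right fun hS => ⟨fun hmax y hy => ?_, fun hdom T hT hST => ?_⟩
  · by_contra! hno
    exact hy (hmax _ (hS.insert G hno) (subset_insert y S) ▸ mem_insert_self y S)
  · refine Subset.antisymm hST fun y hyT => ?_
    by_contra hyS
    obtain ⟨x, hxS, hxy⟩ := hdom y hyS
    exact hT (mem_coe.2 (hST hxS)) (mem_coe.2 hyT) hxy

theorem isMaxStable_iff_isMaximalStableIn_univ [Fintype V] [DecidableEq V] (S : Finset V) :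
    IsMaxStable G S ↔ IsMaximalStableIn G univ S := by
  simp [isMaxStable_iff_dominating, IsMaximalStableIn]

theorem isMaxStable_induce_iff [Fintype V] [DecidableEq V] (U : Finset V)
    (S : Finset (↑U : Set V)) :
    IsMaxStable (G.induce ↑U) S ↔
      IsMaximalStableIn G U (S.map (Function.Embedding.subtype _)) := by
  simp only [SetLike.coe_sort_coe, isMaxStable_iff_dominating, IsStable, SetLike.mem_coe,
    SimpleGraph.comap_adj, Function.Embedding.subtype_apply, Subtype.forall, Subtype.exists,
    exists_and_right, IsMaximalStableIn, subset_iff, mem_map, exists_eq_right, forall_exists_index,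
    coe_map, Function.Embedding.coe_subtype, Set.mem_image, not_exists]
  exact ⟨fun ⟨hS, hdom⟩ => ⟨fun _ hx _ => hx, @fun x hx hxS y hy hyS => hS x hx hxS y hy hyS,
      fun y hy h => hdom y hy (h hy)⟩,
    fun ⟨_, hS, hdom⟩ => ⟨fun x hx hxS y hy hyS => hS hx hxS hy hyS,
      fun y hy h => hdom y hy fun _ => h⟩⟩

theorem exists_isMaximalStableIn (U : Finset V) :
    ∃ S, IsMaximalStableIn G U S := by
  classical
  obtain ⟨S, hS, hmax⟩ := exists_max_image
    (U.powerset.filter fun S : Finset V => IsStable G ↑S) card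
    ⟨∅, by simp [IsStable]⟩
  simp only [mem_filter, mem_powerset] at hS hmax
  refine ⟨S, hS.1, hS.2, fun y hyU hyS => ?_⟩
  by_contra! hno
  have := hmax _ ⟨insert_subset hyU hS.1, hS.2.insert G hno⟩
  rw [card_insert_of_notMem hyS] at this
  omega

theorem not_kEquistableOn_zero (U : Finset V) : ¬KEquistableOn G U 0 := by
  rintro ⟨t, ht, w, hw, h⟩
  obtain ⟨S, hS⟩ := exists_isMaximalStableIn G U
  have hsum := (h S hS.1).1 hS
  rw [sum_eq_zero fun x hx => Nat.le_zero.1 (hw x (hS.1 hx)).2] at hsum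
  omega

end MaximalStable

section Transfer

variable [Fintype V] [DecidableEq V] (G : SimpleGraph V) (k : ℕ)

theorem kEquistable_iff_kEquistableOn_univ : KEquistable G k ↔ KEquistableOn G univ k := by
  simp [KEquistable, KEquistableOn, EquistableStruct, EquistableOn,
    isMaxStable_iff_isMaximalStableIn_univ]

theorem kEquistable_induce_iff (U : Finset V) :
    KEquistable (G.induce ↑U) k ↔ KEquistableOn G U k := by
  constructor
  · rintro ⟨t, ht, w, hw, hS⟩
    refine ⟨t, ht, fun x => if hx : x ∈ U then w ⟨x, hx⟩ else 0,
      fun x hx => by simpa [hx] using hw ⟨x, hx⟩, fun S hSU => ?_⟩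
    have hmap : (S.subtype (· ∈ (U : Set V))).map (Function.Embedding.subtype _) = S :=
      subtype_map_of_mem fun x hx => hSU hx
    rw [← hmap, ← isMaxStable_induce_iff, hS, sum_map]
    simp
  · rintro ⟨t, ht, w, hw, hS⟩
    refine ⟨t, ht, fun x => w x, fun x => hw x x.2, fun S => ?_⟩
    rw [isMaxStable_induce_iff, hS _ (coe_subset.1 (map_subtype_subset S)), sum_map]
    rfl

end Transfer

section Isolated

variable [DecidableEq V] {G : SimpleGraph V} {W A D : Finset V} {k : ℕ}

theorem isMaximalStableIn_union_iff (hA : ∀ x ∈ A, ∀ y, ¬G.Adj x y) (hWA : Disjoint W A)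
    (S : Finset V) :
    IsMaximalStableIn G (W ∪ A) S ↔ A ⊆ S ∧ IsMaximalStableIn G W (S \ A) := by
  constructor
  · rintro ⟨hSU, hS, hdom⟩
    have hAS : A ⊆ S := fun y hy => by
      by_contra hyS
      obtain ⟨x, -, hxy⟩ := hdom y (mem_union_right W hy) hyS
      exact hA y hy x hxy.symm
    refine ⟨hAS, fun x hx => ?_, fun x hx y hy => hS (sdiff_subset hx) (sdiff_subset hy),
      fun y hy hyS => ?_⟩
    · obtain ⟨hxS, hxA⟩ := mem_sdiff.1 hx
      exact (mem_union.1 (hSU hxS)).resolve_right hxA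
    · have hyA : y ∉ A := disjoint_left.1 hWA hy
      obtain ⟨x, hxS, hxy⟩ := hdom y (mem_union_left A hy) fun h => hyS (mem_sdiff.2 ⟨h, hyA⟩)
      exact ⟨x, mem_sdiff.2 ⟨hxS, fun hxA => hA x hxA y hxy⟩, hxy⟩
  · rintro ⟨hAS, hSW, hS, hdom⟩
    have hsplit : ∀ x ∈ S, x ∈ A ∨ x ∈ S \ A := fun x hx => by
      by_cases hxA : x ∈ A
      · exact .inl hxA
      · exact .inr (mem_sdiff.2 ⟨hx, hxA⟩)
    refine ⟨fun x hx => ?_, fun x hx y hy hxy => ?_, fun y hy hyS => ?_⟩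
    · rcases hsplit x hx with hxA | hxSA
      · exact mem_union_right W hxA
      · exact mem_union_left A (hSW hxSA)
    · rcases hsplit x hx with hxA | hxSA
      · exact hA x hxA y hxy
      rcases hsplit y hy with hyA | hySA
      · exact hA y hyA x hxy.symm
      · exact hS hxSA hySA hxy
    · have hyW : y ∈ W := (mem_union.1 hy).resolve_right fun hyA => hyS (hAS hyA)
      obtain ⟨x, hxSA, hxy⟩ := hdom y hyW fun h => hyS (mem_sdiff.1 h).1
      exact ⟨x, (mem_sdiff.1 hxSA).1, hxy⟩

theorem equistableOn_union_iff (hA : ∀ x ∈ A, ∀ y, ¬G.Adj x y) (hWA : Disjoint W A)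
    (w : V → ℕ) (μ : ℕ) :
    EquistableOn G (W ∪ A) w (∑ x ∈ A, w x + μ) ↔
      ∀ M ⊆ W, ∀ B ⊆ A, (∑ x ∈ M, w x = μ + ∑ x ∈ B, w x ↔ B = ∅ ∧ IsMaximalStableIn G W M) := by
  have key : ∀ S : Finset V,
      (IsMaximalStableIn G (W ∪ A) S ↔ ∑ x ∈ S, w x = ∑ x ∈ A, w x + μ) ↔
      (∑ x ∈ S \ A, w x = μ + ∑ x ∈ A \ S, w x ↔ A \ S = ∅ ∧ IsMaximalStableIn G W (S \ A)) := by
    intro S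
    have hsum : ∑ x ∈ S, w x + ∑ x ∈ A \ S, w x = ∑ x ∈ A, w x + ∑ x ∈ S \ A, w x := by
      rw [← sum_union disjoint_sdiff, ← sum_union disjoint_sdiff, union_sdiff_self_eq_union,
        union_sdiff_self_eq_union, union_comm]
    have hw : ∑ x ∈ S, w x = ∑ x ∈ A, w x + μ ↔ ∑ x ∈ S \ A, w x = μ + ∑ x ∈ A \ S, w x := by
      omega
    rw [isMaximalStableIn_union_iff hA hWA, sdiff_eq_empty_iff_subset, hw]
    exact iff_comm
  constructor
  · intro h M hM B hB
    have hMA : Disjoint M A := hWA.mono_left hM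
    have h1 : ((A \ B) ∪ M) \ A = M := by
      ext x
      have : x ∈ M → x ∉ A := fun h => disjoint_left.1 hMA h
      simp only [mem_sdiff, mem_union]
      tauto
    have h2 : A \ ((A \ B) ∪ M) = B := by
      ext x
      have : x ∈ M → x ∉ A := fun h => disjoint_left.1 hMA h
      have := @hB x
      simp only [mem_sdiff, mem_union]
      tauto
    have hS : (A \ B) ∪ M ⊆ W ∪ A := union_subset (sdiff_subset.trans subset_union_right)
      (hM.trans subset_union_left)
    simpa only [h1, h2] using (key _).1 (h _ hS)
  · intro h S hS
    refine (key S).2 (h _ (fun x hx => ?_) _ sdiff_subset)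
    obtain ⟨hxS, hxA⟩ := mem_sdiff.1 hx
    exact (mem_union.1 (hS hxS)).resolve_right hxA

theorem EquistableOn.exists_eq_sum_add (hA : ∀ x ∈ A, ∀ y, ¬G.Adj x y) (hWA : Disjoint W A)
    {w : V → ℕ} {t : ℕ} (h : EquistableOn G (W ∪ A) w t) : ∃ μ, t = ∑ x ∈ A, w x + μ := by
  obtain ⟨M, hM⟩ := exists_isMaximalStableIn G W
  have hMA : Disjoint A M := (hWA.mono_left hM.1).symm
  have hmax : IsMaximalStableIn G (W ∪ A) (A ∪ M) := by
    rw [isMaximalStableIn_union_iff hA hWA, union_sdiff_cancel_left hMA]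
    exact ⟨subset_union_left, hM⟩
  refine ⟨∑ x ∈ M, w x, ?_⟩
  have hAM : A ∪ M ⊆ W ∪ A := union_subset subset_union_right (hM.1.trans subset_union_left)
  rw [← sum_union hMA, (h _ hAM).1 hmax]

theorem KEquistableOn.restrict_isolated (h : KEquistableOn G (W ∪ A) k)
    (hA : ∀ x ∈ A, ∀ y, ¬G.Adj x y) (hWA : Disjoint W A) (hDA : D ⊆ A) (hD : D.Nonempty) :
    KEquistableOn G (W ∪ D) k := by
  obtain ⟨t, -, w, hw, hstruct⟩ := h
  obtain ⟨μ, rfl⟩ := hstruct.exists_eq_sum_add hA hWA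
  have hcond := (equistableOn_union_iff hA hWA w μ).1 hstruct
  obtain ⟨d, hd⟩ := hD
  refine ⟨∑ x ∈ D, w x + μ, ?_, w, fun x hx => hw x (union_subset_union_right hDA hx),
    (equistableOn_union_iff (fun x hx => hA x (hDA hx)) (hWA.mono_right hDA) w μ).2
      fun M hM B hB => hcond M hM B (hB.trans hDA)⟩
  have := single_le_sum (fun x _ => Nat.zero_le (w x)) hd
  have := (hw d (mem_union_right W (hDA hd))).1
  omega

theorem KEquistableOn.extend_isolated (h : KEquistableOn G (W ∪ D) k)
    (hA : ∀ x ∈ A, ∀ y, ¬G.Adj x y) (hWA : Disjoint W A) (hk : 0 < k) (hW : #W ≤ k ^ 3)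
    (hDA : D ⊆ A) (hD : #D = k ^ 4) :
    KEquistableOn G (W ∪ A) k := by
  obtain ⟨t, -, a, ha, hstruct⟩ := h
  obtain ⟨μ, rfl⟩ := hstruct.exists_eq_sum_add (fun x hx => hA x (hDA hx)) (hWA.mono_right hDA)
  have hcond := (equistableOn_union_iff (fun x hx => hA x (hDA hx)) (hWA.mono_right hDA) a μ).1
    hstruct
  obtain ⟨u, hu1, huk, hsums⟩ :=
    exists_forall_mul_eq_subset_sum a hk hD fun x hx => ha x (mem_union_right W hx)
  set w : V → ℕ := fun x => if x ∈ A then u else a x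
  have hwW : ∀ M ⊆ W, ∑ x ∈ M, w x = ∑ x ∈ M, a x := fun M hM =>
    sum_congr rfl fun x hx => if_neg (disjoint_left.1 hWA (hM hx))
  have hwA : ∀ B ⊆ A, ∑ x ∈ B, w x = #B * u := fun B hB => by
    rw [sum_congr rfl fun x hx => if_pos (hB hx), sum_const, smul_eq_mul]
  have hWsum : ∀ M ⊆ W, ∑ x ∈ M, a x ≤ k ^ 4 := fun M hM => calc
    ∑ x ∈ M, a x ≤ #M * k := by
      simpa using sum_le_card_nsmul M a k fun x hx => (ha x (mem_union_left D (hM hx))).2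
    _ ≤ k ^ 3 * k := Nat.mul_le_mul_right k ((card_le_card hM).trans hW)
    _ = k ^ 4 := by ring
  refine ⟨∑ x ∈ A, w x + μ, ?_, w, fun x hx => ?_,
    (equistableOn_union_iff hA hWA w μ).2 fun M hM B hB => ?_⟩
  · rw [hwA A subset_rfl]
    have := (card_le_card hDA).trans_lt' (by rw [hD]; positivity)
    have := Nat.mul_pos this hu1
    omega
  · by_cases hxA : x ∈ A
    · simp only [w, if_pos hxA]
      exact ⟨hu1, huk⟩
    · simp only [w, if_neg hxA]
      exact ha x (mem_union_left D ((mem_union.1 hx).resolve_right hxA))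
  rw [hwW M hM, hwA B hB, ← card_eq_zero]
  exact sum_eq_add_mul_iff_of_forall_mul_eq_sum _ hu1 hcond hsums hWsum hM #B

theorem kEquistableOn_union_iff_of_isolated (hA : ∀ x ∈ A, ∀ y, ¬G.Adj x y)
    (hWA : Disjoint W A) (hW : #W ≤ k ^ 3) (hDA : D ⊆ A) (hD : #D = k ^ 4) :
    KEquistableOn G (W ∪ A) k ↔ KEquistableOn G (W ∪ D) k := by
  rcases Nat.eq_zero_or_pos k with rfl | hk
  · exact iff_of_false (not_kEquistableOn_zero G _) (not_kEquistableOn_zero G _)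
  have hDne : D.Nonempty := card_pos.1 (by rw [hD]; positivity)
  exact ⟨fun h => h.restrict_isolated hA hWA hDA hDne,
    fun h => h.extend_isolated hA hWA hk hW hDA hD⟩

end Isolated

theorem stmt13_general [Fintype V] [DecidableEq V] (G : SimpleGraph V) (k : ℕ)
    (X : Finset V) (hXs : IsStable G ↑X)
    (hiso : ∀ x ∈ X, ∀ y, y ∉ X → ¬ G.Adj x y)
    (hsmall : Xᶜ.card ≤ k ^ 3)
    (D : Finset V) (hD : D ⊆ X) (hDcard : D.card = k ^ 4) :
    KEquistable G k ↔ KEquistable (G.induce ↑(Xᶜ ∪ D)) k := by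
  have hX : ∀ x ∈ X, ∀ y, ¬G.Adj x y := fun x hx y =>
    if hy : y ∈ X then hXs hx hy else hiso x hx y hy
  rw [kEquistable_iff_kEquistableOn_univ, kEquistable_induce_iff, ← union_compl X, union_comm]
  exact kEquistableOn_union_iff_of_isolated hX disjoint_compl_left hsmall hD hDcard

theorem stmt13 [Fintype V] [DecidableEq V] (G : SimpleGraph V) (k : ℕ)
    (X : Finset V) (hX : TwinClass G ↑X) (hXs : IsStable G ↑X)
    (hiso : ∀ x ∈ X, ∀ y, y ∉ X → ¬ G.Adj x y)
    (hXbig : k ^ 5 ≤ X.card) (hsmall : Xᶜ.card ≤ k ^ 3)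
    (D : Finset V) (hD : D ⊆ X) (hDcard : D.card = k ^ 4) :
    KEquistable G k ↔ KEquistable (G.induce ↑(Xᶜ ∪ D)) k :=
  stmt13_general G k X hXs hiso hsmall D hD hDcard
end
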